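/- Consider the deterministic control problem of maximizing $\int_0^T (k(t)\bar B_t + \bar\beta_t - c(t,\bar\beta_t))dt$ over measurable controls $\bar\beta:[0,T]\to A$, subject to $\frac{d\bar B_t}{dt} = k(t)\bar B_t + \bar\beta_t$, $\bar B_0 = 0$, where $c(t,\cdot)$ is strictly convex and differentiable with $\partial_b c(t,\cdot)$ surjective onto $\mathbb{R}$, and $k$ is continuous. Then the optimal control is $\bar\beta^*(t) = (\partial_b c(t,\cdot))^{-1}(\rho_t + 1)$ where $\rho_t = e^{\int_t^T k(s)ds}-1$. -/

import Mathlib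

open Set intervalIntegral

/-- Subgradient inequality for a convex function on `univ`. -/
lemma subgradient_ineq (f : ℝ → ℝ) (hf : ConvexOn ℝ Set.univ f) (x y f' : ℝ)
    (hd : HasDerivAt f f' x) : f x + f' * (y - x) ≤ f y := by
  rcases lt_trichotomy x y with h | h | h
  · have h1 := hf.le_slope_of_hasDerivAt (mem_univ x) (mem_univ y) h hd
    rw [slope_def_field, le_div_iff₀ (sub_pos.mpr h)] at h1
    linarith
  · simp [h]
  · have h1 := hf.slope_le_of_hasDerivAt (mem_univ y) (mem_univ x) h hd
    rw [slope_def_field, div_le_iff₀ (sub_pos.mpr h)] at h1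
    nlinarith

/-- Pontryagin maximum principle for the deterministic control problem
`max ∫₀ᵀ (k(t) B̄_t + β̄_t - c(t, β̄_t)) dt` subject to `B̄' = k B̄ + β̄`, `B̄₀ = 0`:
the control `β̄*` characterized by `∂_b c(t, β̄*(t)) = ρ_t + 1 = e^{∫_t^T k}` is optimal. -/
theorem deterministic_control_optimal
    (T : ℝ) (hT : 0 < T) (k : ℝ → ℝ) (hk : Continuous k)
    (c : ℝ → ℝ → ℝ) (hc : Continuous fun p : ℝ × ℝ => c p.1 p.2)
    (hconv : ∀ t, StrictConvexOn ℝ Set.univ (c t))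
    (c' : ℝ → ℝ → ℝ) (hc' : ∀ t b, HasDerivAt (c t) (c' t b) b)
    (hbij : ∀ t, Function.Bijective (c' t))
    -- the candidate optimal control: β̄*(t) = (∂_b c(t,·))⁻¹(ρ_t + 1) with ρ_t = e^{∫_t^T k} - 1
    (βstar : ℝ → ℝ) (hβstarc : Continuous βstar)
    (hβstar : ∀ t, c' t (βstar t) = (Real.exp (∫ s in t..T, k s) - 1) + 1)
    (Bstar : ℝ → ℝ) (hBstar0 : Bstar 0 = 0)
    (hBstar : ∀ t, HasDerivAt Bstar (k t * Bstar t + βstar t) t)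
    -- any other admissible control with its state trajectory
    (β : ℝ → ℝ) (hβc : Continuous β)
    (B : ℝ → ℝ) (hB0 : B 0 = 0)
    (hB : ∀ t, HasDerivAt B (k t * B t + β t) t) :
    (∫ t in (0:ℝ)..T, (k t * B t + β t - c t (β t))) ≤
      ∫ t in (0:ℝ)..T, (k t * Bstar t + βstar t - c t (βstar t)) := by
  -- the adjoint process
  set ρ : ℝ → ℝ := fun t => Real.exp (∫ s in t..T, k s) - 1 with hρdef
  have hρT : ρ T = 0 := by simp [hρdef]
  have hkint : ∀ a b : ℝ, IntervalIntegrable k MeasureTheory.volume a b :=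
    fun a b => hk.intervalIntegrable a b
  have hρderiv : ∀ t, HasDerivAt ρ (-(k t) * (ρ t + 1)) t := by
    intro t
    have hF : HasDerivAt (fun u => ∫ s in u..T, k s) (-(k t)) t := by
      have := intervalIntegral.integral_hasStrictDerivAt_left (hkint t T)
        (hk.stronglyMeasurableAtFilter _ _) hk.continuousAt
      exact this.hasDerivAt
    have : HasDerivAt (fun u => Real.exp (∫ s in u..T, k s) - 1)
        (Real.exp (∫ s in t..T, k s) * (-(k t))) t := ((hF.exp).sub_const 1)
    convert this using 1
    simp [hρdef]; ring
  have hρcont : Continuous ρ :=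
    continuous_iff_continuousAt.mpr fun t => (hρderiv t).continuousAt
  have hBcont : Continuous B := continuous_iff_continuousAt.mpr fun t => (hB t).continuousAt
  have hBscont : Continuous Bstar :=
    continuous_iff_continuousAt.mpr fun t => (hBstar t).continuousAt
  have hcβ : Continuous (fun t => c t (β t)) := hc.comp (continuous_id.prodMk hβc)
  have hcβs : Continuous (fun t => c t (βstar t)) := hc.comp (continuous_id.prodMk hβstarc)
  -- key identity: ∫ k (Bstar - B) = ∫ ρ (βstar - β)
  have hgderiv : ∀ t, HasDerivAt (fun u => ρ u * (Bstar u - B u))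
      (-(k t) * (Bstar t - B t) + ρ t * (βstar t - β t)) t := by
    intro t
    have : HasDerivAt (fun u => ρ u * (Bstar u - B u)) (-(k t) * (ρ t + 1) * (Bstar t - B t) +
        ρ t * ((k t * Bstar t + βstar t) - (k t * B t + β t))) t :=
      (hρderiv t).mul ((hBstar t).sub (hB t))
    convert this using 1
    ring
  have hgcont : Continuous fun t => -(k t) * (Bstar t - B t) + ρ t * (βstar t - β t) :=
    ((hk.neg.mul (hBscont.sub hBcont)).add (hρcont.mul (hβstarc.sub hβc)))
  have hkey : (∫ t in (0:ℝ)..T, (-(k t) * (Bstar t - B t) + ρ t * (βstar t - β t))) = 0 := by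
    rw [intervalIntegral.integral_eq_sub_of_hasDerivAt
      (fun t _ => hgderiv t) (hgcont.intervalIntegrable 0 T)]
    simp [hρT, hBstar0, hB0]
  -- pointwise inequality from convexity
  have hpt : ∀ t, (ρ t + 1) * (βstar t - β t) + c t (β t) - c t (βstar t) ≥ 0 := by
    intro t
    have := subgradient_ineq (c t) (hconv t).convexOn (βstar t) (β t)
      (c' t (βstar t)) (hc' t (βstar t))
    rw [hβstar t] at this
    simp only [hρdef]
    nlinarith [this]
  -- assemble
  have hh : Continuous fun t => (ρ t + 1) * (βstar t - β t) + c t (β t) - c t (βstar t) :=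
    (((hρcont.add continuous_const).mul (hβstarc.sub hβc)).add hcβ).sub hcβs
  rw [← sub_nonneg, ← intervalIntegral.integral_sub
    (f := fun t => k t * Bstar t + βstar t - c t (βstar t)) (g := fun t => k t * B t + β t - c t (β t))
    ((((hk.mul hBscont).add hβstarc).sub hcβs).intervalIntegrable 0 T)
    ((((hk.mul hBcont).add hβc).sub hcβ).intervalIntegrable 0 T)]
  have hkey2 : (∫ t in (0:ℝ)..T, (k t * (Bstar t - B t) - ρ t * (βstar t - β t))) = 0 := by
    have : (∫ t in (0:ℝ)..T, (k t * (Bstar t - B t) - ρ t * (βstar t - β t))) =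
        -∫ t in (0:ℝ)..T, (-(k t) * (Bstar t - B t) + ρ t * (βstar t - β t)) := by
      rw [← intervalIntegral.integral_neg]
      apply intervalIntegral.integral_congr
      intro t _; ring
    rw [this, hkey, neg_zero]
  have hsplit : (∫ t in (0:ℝ)..T,
      (k t * Bstar t + βstar t - c t (βstar t) - (k t * B t + β t - c t (β t)))) =
      (∫ t in (0:ℝ)..T, (k t * (Bstar t - B t) - ρ t * (βstar t - β t))) +
      ∫ t in (0:ℝ)..T, ((ρ t + 1) * (βstar t - β t) + c t (β t) - c t (βstar t)) := by
    rw [← intervalIntegral.integral_add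
      (f := fun t => k t * (Bstar t - B t) - ρ t * (βstar t - β t))
      (g := fun t => (ρ t + 1) * (βstar t - β t) + c t (β t) - c t (βstar t))
      ((hk.mul (hBscont.sub hBcont)).sub (hρcont.mul (hβstarc.sub hβc)) |>.intervalIntegrable 0 T)
      (hh.intervalIntegrable 0 T)]
    apply intervalIntegral.integral_congr
    intro t _
    ring
  rw [hsplit, hkey2, zero_add]
  exact intervalIntegral.integral_nonneg hT.le fun u _ => hpt u
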